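/- (Theorem 2, inverse probability weighting identification for the treated-arm mean.) Under the sensitivity parametrization, with weight w1(X) = e(X) + (1−e(X))/ε1(X), the mean of the potential outcome under treatment is identified as E[Y(1)] = E[w1(X)·Z·Y / e(X)]. -/

import Mathlib

/-!
Split `Y(1) = Z·Y(1) + (1 - Z)·Y(1)`. The sensitivity condition expresses the conditional mean of
the untreated part through that of the treated part, `E[(1-Z)Y(1) | X] = (1-e)/(ε₁ e) · E[Z Y(1) | X]`,
so `E[Y(1) | X] = w₁/e · E[Z Y(1) | X] = E[w₁ Z Y / e | X]`, the weight being `X`-measurable and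
`Z Y = Z Y(1)`. Taking expectations gives the identity.
-/

open MeasureTheory

section

variable {Ω : Type*} {m m₀ : MeasurableSpace Ω} {μ : Measure Ω}

theorem integral_eq_integral_of_condExp_ae_eq {f g : Ω → ℝ} (hm : m ≤ m₀)
    [SigmaFinite (μ.trim hm)] (hfg : μ[f | m] =ᵐ[μ] μ[g | m]) :
    ∫ ω, f ω ∂μ = ∫ ω, g ω ∂μ := by
  rw [← integral_condExp hm, integral_congr_ae hfg, integral_condExp hm]

theorem MeasureTheory.Integrable.mul_of_forall_eq_zero_or_one {Z W : Ω → ℝ}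
    (hZ : AEStronglyMeasurable Z μ) (hZ01 : ∀ ω, Z ω = 0 ∨ Z ω = 1) (hW : Integrable W μ) :
    Integrable (fun ω => Z ω * W ω) μ :=
  hW.bdd_mul (c := 1) hZ <| .of_forall fun ω => by rcases hZ01 ω with h | h <;> simp [h]

theorem inv_prob_weight_mul_div_eq_add {e ε a b : ℝ} (he : e ≠ 0) (hε : ε ≠ 0)
    (hsens : (1 - e) * a = ε * e * b) :
    (e + (1 - e) / ε) / e * a = a + b := by
  field_simp
  linear_combination hsens

theorem condExp_inv_prob_weight_ae_eq {Z W e ε : Ω → ℝ}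
    (hZW : Integrable (fun ω => Z ω * W ω) μ) (hZW' : Integrable (fun ω => (1 - Z ω) * W ω) μ)
    (he : StronglyMeasurable[m] e) (hε : StronglyMeasurable[m] ε)
    (he0 : ∀ᵐ ω ∂μ, e ω ≠ 0) (hε0 : ∀ᵐ ω ∂μ, ε ω ≠ 0)
    (hsens : ∀ᵐ ω ∂μ, (1 - e ω) * μ[fun ω' => Z ω' * W ω' | m] ω
      = ε ω * e ω * μ[fun ω' => (1 - Z ω') * W ω' | m] ω)
    (hint : Integrable (fun ω => (e ω + (1 - e ω) / ε ω) * (Z ω * W ω) / e ω) μ) :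
    μ[fun ω => (e ω + (1 - e ω) / ε ω) * (Z ω * W ω) / e ω | m] =ᵐ[μ] μ[W | m] := by
  set weight : Ω → ℝ := fun ω => (e ω + (1 - e ω) / ε ω) / e ω
  have hweight : StronglyMeasurable[m] weight :=
    (he.add ((stronglyMeasurable_const.sub he).div hε)).div he
  have hsplit : μ[W | m] =ᵐ[μ]
      μ[fun ω => Z ω * W ω | m] + μ[fun ω => (1 - Z ω) * W ω | m] := by
    have hW : W = (fun ω => Z ω * W ω) + fun ω => (1 - Z ω) * W ω := by
      funext ω; simp only [Pi.add_apply]; ring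
    conv_lhs => rw [hW]
    exact condExp_add hZW hZW' m
  have hfun : (fun ω => (e ω + (1 - e ω) / ε ω) * (Z ω * W ω) / e ω)
      = weight * fun ω => Z ω * W ω := by
    funext ω; simp only [weight, Pi.mul_apply]; ring
  rw [hfun] at hint ⊢
  refine (condExp_mul_of_stronglyMeasurable_left hweight hint hZW).trans ?_
  filter_upwards [he0, hε0, hsens, hsplit] with ω he0 hε0 hsens hsplit
  rw [hsplit]
  exact inv_prob_weight_mul_div_eq_add he0 hε0 hsens

end

/-- Theorem 2 (inverse probability weighting identification, treated arm). -/
theorem ipw_identification_treated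
    {Ω : Type*} [F : MeasurableSpace Ω] (P : Measure Ω) [IsProbabilityMeasure P]
    (Z Y1 Y0 Y : Ω → ℝ)
    (hZmeas : Measurable Z) (hZ01 : ∀ ω, Z ω = 0 ∨ Z ω = 1)
    (hY1int : Integrable Y1 P)
    (hYdef : ∀ ω, Y ω = Z ω * Y1 ω + (1 - Z ω) * Y0 ω)
    (mX : MeasurableSpace Ω) (hmX : mX ≤ F)
    (eX : Ω → ℝ) (heXmeas : Measurable[mX] eX)
    (hov : ∀ᵐ ω ∂P, 0 < eX ω ∧ eX ω < 1)
    (eps1 : Ω → ℝ)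
    (heps1meas : Measurable[mX] eps1)
    (heps1pos : ∀ᵐ ω ∂P, 0 < eps1 ω)
    (hsens1 : ∀ᵐ ω ∂P, (1 - eX ω) * (P[fun ω' => Z ω' * Y1 ω'|mX]) ω
        = eps1 ω * eX ω * (P[fun ω' => (1 - Z ω') * Y1 ω'|mX]) ω)
    (hint1 : Integrable (fun ω => (eX ω + (1 - eX ω) / eps1 ω) * (Z ω * Y ω) / eX ω) P) :
    ∫ ω, Y1 ω ∂P = ∫ ω, (eX ω + (1 - eX ω) / eps1 ω) * (Z ω * Y ω) / eX ω ∂P := by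
  have hZY : ∀ ω, Z ω * Y ω = Z ω * Y1 ω := fun ω => by
    rcases hZ01 ω with h | h <;> rw [hYdef ω, h] <;> ring
  have hZ01' : ∀ ω, 1 - Z ω = 0 ∨ 1 - Z ω = 1 := fun ω => by
    rcases hZ01 ω with h | h <;> simp [h]
  simp_rw [hZY] at hint1 ⊢
  refine (integral_eq_integral_of_condExp_ae_eq hmX ?_).symm
  refine condExp_inv_prob_weight_ae_eq
    (hY1int.mul_of_forall_eq_zero_or_one hZmeas.aestronglyMeasurable hZ01)
    (hY1int.mul_of_forall_eq_zero_or_one (measurable_const.sub hZmeas).aestronglyMeasurable hZ01')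
    heXmeas.stronglyMeasurable heps1meas.stronglyMeasurable
    (hov.mono fun ω h => h.1.ne') (heps1pos.mono fun ω h => h.ne') hsens1 hint1
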